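/- arXiv:2011.11963 — 5 statements merged into one kernel-verified Lean document; each statement's English description precedes it below -/
import Mathlib

section
/- Let A be an n×n Hermitian complex matrix and ρ_i an n×n density matrix. If a state ρ = Uρ_iU† (U unitary) minimizes, or maximizes, the expectation value tr(ρ'A) among all states ρ' = Vρ_iV† with V unitary, then ρ commutes with A (i.e., passive and maximally active states are incoherent). -/
open Matrix Kronecker
open scoped ComplexOrder

attribute [local instance] Matrix.frobeniusSeminormedAddCommGroup
  Matrix.frobeniusNormedAddCommGroup Matrix.frobeniusNormedSpace

noncomputable section

namespace QSLPaper

/-- `U` is a unitary matrix. -/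
def IsUnitary {ι : Type*} [Fintype ι] [DecidableEq ι] (U : Matrix ι ι ℂ) : Prop :=
  Uᴴ * U = 1

/-- `ρ` is a density matrix: positive semidefinite with unit trace. -/
def IsDensity {ι : Type*} [Fintype ι] [DecidableEq ι] (ρ : Matrix ι ι ℂ) : Prop :=
  ρ.PosSemidef ∧ ρ.trace = 1

/-- `ρ` is passive relative to the observable `A` and the initial state `ρi`:
`tr(ρA) ≤ tr(VρiV†A)` for every unitary `V`. -/
def IsPassive {ι : Type*} [Fintype ι] [DecidableEq ι] (A ρi ρ : Matrix ι ι ℂ) : Prop :=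
  ∀ V : Matrix ι ι ℂ, IsUnitary V → ((ρ * A).trace).re ≤ (((V * ρi * Vᴴ) * A).trace).re

/-- `ρ` is a passive state: a state (unitary conjugate of `ρi`) which is passive. -/
def IsPassiveState {ι : Type*} [Fintype ι] [DecidableEq ι] (A ρi ρ : Matrix ι ι ℂ) : Prop :=
  (∃ U, IsUnitary U ∧ ρ = U * ρi * Uᴴ) ∧ IsPassive A ρi ρ

/-- `P(ρi)`: the set of unitaries transforming `ρi` into a passive state. -/
def PassivizingSet {ι : Type*} [Fintype ι] [DecidableEq ι] (A ρi : Matrix ι ι ℂ) :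
    Set (Matrix ι ι ℂ) :=
  {U | IsUnitary U ∧ IsPassive A ρi (U * ρi * Uᴴ)}

/-- There is a continuous family of Hermitian Hamiltonians on `[0,τ]` with
`tr(H(t)²) ≤ b` driving `ρ0` (via the von Neumann equation) to a state satisfying `final`
in time `τ`. -/
def ReachesIn {ι : Type*} [Fintype ι] [DecidableEq ι]
    (ρ0 : Matrix ι ι ℂ) (final : Matrix ι ι ℂ → Prop) (b τ : ℝ) : Prop :=
  ∃ H ρ : ℝ → Matrix ι ι ℂ,
    ContinuousOn H (Set.Icc 0 τ) ∧
    (∀ t ∈ Set.Icc (0:ℝ) τ, (H t).IsHermitian) ∧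
    (∀ t ∈ Set.Icc (0:ℝ) τ, ((H t * H t).trace).re ≤ b) ∧
    ρ 0 = ρ0 ∧
    (∀ t ∈ Set.Icc (0:ℝ) τ,
      HasDerivWithinAt ρ ((-Complex.I) • (H t * ρ t - ρ t * H t)) (Set.Icc 0 τ) t) ∧
    final (ρ τ)

/-- The passivization time: the infimum of times in which `ρi` can be driven to a passive
state by a Hamiltonian of bandwidth at most `ω²`. -/
def tauPas {ι : Type*} [Fintype ι] [DecidableEq ι] (A ρi : Matrix ι ι ℂ) (ω : ℝ) : ℝ :=
  sInf {τ | 0 ≤ τ ∧ ReachesIn ρi (IsPassive A ρi) (ω^2) τ}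

/-- `e` is an orthonormal family (hence basis) of `ℂⁿ`. -/
def IsONBasis {n : ℕ} (e : Fin n → (Fin n → ℂ)) : Prop :=
  ∀ j k, star (e j) ⬝ᵥ e k = if j = k then 1 else 0

/-- The discrepancy: given the eigenvalue lists `a` (of `A`), `p` (of `ρi`) and `q`
(of the reference passive state), it is the sum over the distinct eigenvalues `x` of `A`
of the cardinality of the multiset difference `{p k : a k = x} \ {q k : a k = x}`. -/
def discrepancy {n : ℕ} (a p q : Fin n → ℝ) : ℕ := by
  classical
  exact ∑ x ∈ Finset.univ.image a,
    ((((Finset.univ.filter fun k => a k = x)).val.map p)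
      - (((Finset.univ.filter fun k => a k = x)).val.map q)).card

/-!
Conjugating `ρ` by `exp (t • X)` with `X` skew-Hermitian moves it along the unitary orbit of
`ρi`, and at an extremum the derivative `Re tr (X [ρ, A])` of `Re tr (ρ(t) A)` at `t = 0`
vanishes. For `X = [ρ, A]`, which is skew-Hermitian because `ρ` and `A` are Hermitian, this
derivative is `-‖[ρ, A]‖²` (Frobenius norm), so `[ρ, A] = 0`.
-/

open NormedSpace

theorem hasDerivAt_exp_smul_mul_mul_exp_neg_smul {𝔸 : Type*} [NormedRing 𝔸]
    [NormedAlgebra ℝ 𝔸] [CompleteSpace 𝔸] (X a : 𝔸) :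
    HasDerivAt (fun t : ℝ => exp (t • X) * a * exp (t • -X)) (X * a - a * X) 0 := by
  have h := ((hasDerivAt_exp_smul_const X (0 : ℝ)).mul_const a).mul
    (hasDerivAt_exp_smul_const (-X) (0 : ℝ))
  exact h.congr_deriv (by simp [sub_eq_add_neg])

section Matrices

variable {ι : Type*} [Fintype ι]

theorem trace_commutator_mul {R : Type*} [CommRing R] (X ρ A : Matrix ι ι R) :
    ((X * ρ - ρ * X) * A).trace = (X * (ρ * A - A * ρ)).trace := by
  rw [sub_mul, mul_sub, trace_sub, trace_sub, Matrix.mul_assoc, Matrix.mul_assoc,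
    trace_mul_comm ρ, Matrix.mul_assoc]

theorem conjTranspose_commutator_of_isHermitian {R : Type*} [CommRing R] [StarRing R]
    {ρ A : Matrix ι ι R} (hρ : ρ.IsHermitian) (hA : A.IsHermitian) :
    (ρ * A - A * ρ)ᴴ = -(ρ * A - A * ρ) := by
  rw [conjTranspose_sub, conjTranspose_mul, conjTranspose_mul, hρ.eq, hA.eq, neg_sub]

theorem eq_zero_of_re_trace_mul_self_eq_zero {C : Matrix ι ι ℂ} (hC : Cᴴ = -C)
    (h : (C * C).trace.re = 0) : C = 0 := by
  have hnonneg : 0 ≤ (Cᴴ * C).trace := (posSemidef_conjTranspose_mul_self C).trace_nonneg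
  have hre : (Cᴴ * C).trace.re = 0 := by
    rw [hC, Matrix.neg_mul, trace_neg, Complex.neg_re, h, neg_zero]
  refine trace_conjTranspose_mul_self_eq_zero_iff.mp (Complex.ext hre ?_)
  exact (Complex.nonneg_iff.mp hnonneg).2.symm

variable [DecidableEq ι]

attribute [local instance] Matrix.frobeniusNormedRing Matrix.frobeniusNormedAlgebra

theorem re_trace_mul_commutator_eq_zero_of_isLocalExtr {X ρ A : Matrix ι ι ℂ}
    (h : IsLocalExtr (fun t : ℝ => (exp (t • X) * ρ * exp (t • -X) * A).trace.re) 0) :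
    (X * (ρ * A - A * ρ)).trace.re = 0 := by
  let reTrace : Matrix ι ι ℂ →L[ℝ] ℝ :=
    (Complex.reLm.comp ((traceLinearMap ι ℂ ℂ).restrictScalars ℝ)).toContinuousLinearMap
  have hd := reTrace.hasFDerivAt.comp_hasDerivAt (0 : ℝ)
    ((hasDerivAt_exp_smul_mul_mul_exp_neg_smul X ρ).mul_const A)
  rw [← trace_commutator_mul]
  exact h.hasDerivAt_eq_zero hd

theorem isUnitary_exp_of_conjTranspose_eq_neg {X : Matrix ι ι ℂ} (hX : Xᴴ = -X) :
    IsUnitary (exp X) :=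
  (Unitary.mem_iff.mp (exp_mem_unitary_of_mem_skewAdjoint (skewAdjoint.mem_iff.mpr hX))).1

theorem IsUnitary.mul {U V : Matrix ι ι ℂ} (hU : IsUnitary U) (hV : IsUnitary V) :
    IsUnitary (U * V) := by
  unfold IsUnitary at *
  rw [conjTranspose_mul, Matrix.mul_assoc, ← Matrix.mul_assoc Uᴴ, hU, Matrix.one_mul, hV]

theorem exists_isUnitary_conj_eq_exp_smul_conj {X U : Matrix ι ι ℂ} (hX : Xᴴ = -X)
    (hU : IsUnitary U) (ρi : Matrix ι ι ℂ) (t : ℝ) :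
    ∃ V, IsUnitary V ∧ V * ρi * Vᴴ = exp (t • X) * (U * ρi * Uᴴ) * exp (t • -X) := by
  have htX : (t • X)ᴴ = -(t • X) := by rw [conjTranspose_smul, star_trivial, hX, smul_neg]
  refine ⟨exp (t • X) * U, (isUnitary_exp_of_conjTranspose_eq_neg htX).mul hU, ?_⟩
  rw [conjTranspose_mul, ← exp_conjTranspose, htX, smul_neg]
  simp only [Matrix.mul_assoc]

theorem isLocalExtr_exp_smul_conj {f : Matrix ι ι ℂ → ℝ} {X U ρi : Matrix ι ι ℂ}
    (hX : Xᴴ = -X) (hU : IsUnitary U)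
    (hext : (∀ V, IsUnitary V → f (U * ρi * Uᴴ) ≤ f (V * ρi * Vᴴ)) ∨
      (∀ V, IsUnitary V → f (V * ρi * Vᴴ) ≤ f (U * ρi * Uᴴ))) :
    IsLocalExtr (fun t : ℝ => f (exp (t • X) * (U * ρi * Uᴴ) * exp (t • -X))) 0 := by
  have horbit := exists_isUnitary_conj_eq_exp_smul_conj hX hU ρi
  simp only [IsLocalExtr, IsExtrFilter, IsMinFilter, IsMaxFilter, zero_smul, exp_zero,
    Matrix.one_mul, Matrix.mul_one]
  rcases hext with hmin | hmax
  · refine Or.inl (Filter.Eventually.of_forall fun t => ?_)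
    obtain ⟨V, hV, hVρ⟩ := horbit t
    exact hVρ ▸ hmin V hV
  · refine Or.inr (Filter.Eventually.of_forall fun t => ?_)
    obtain ⟨V, hV, hVρ⟩ := horbit t
    exact hVρ ▸ hmax V hV

end Matrices

theorem passive_and_maximally_active_states_are_incoherent_general
    {n : ℕ} (A ρi : Matrix (Fin n) (Fin n) ℂ)
    (hA : A.IsHermitian) (hρi : IsDensity ρi)
    (U : Matrix (Fin n) (Fin n) ℂ) (hU : IsUnitary U)
    (ρ : Matrix (Fin n) (Fin n) ℂ) (hρ : ρ = U * ρi * Uᴴ)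
    (hext : (∀ V : Matrix (Fin n) (Fin n) ℂ, IsUnitary V →
                ((ρ * A).trace).re ≤ (((V * ρi * Vᴴ) * A).trace).re) ∨
            (∀ V : Matrix (Fin n) (Fin n) ℂ, IsUnitary V →
                (((V * ρi * Vᴴ) * A).trace).re ≤ ((ρ * A).trace).re)) :
    ρ * A = A * ρ := by
  subst hρ
  set C := U * ρi * Uᴴ * A - A * (U * ρi * Uᴴ)
  have hC : Cᴴ = -C :=
    conjTranspose_commutator_of_isHermitian (isHermitian_mul_mul_conjTranspose U hρi.1.1) hA
  have hstationary := re_trace_mul_commutator_eq_zero_of_isLocalExtr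
    (isLocalExtr_exp_smul_conj (f := fun ρ' => (ρ' * A).trace.re) hC hU hext)
  exact sub_eq_zero.mp (eq_zero_of_re_trace_mul_self_eq_zero hC hstationary)

/-- If a state `ρ = UρiU†` minimizes, or maximizes, `tr(ρ'A)` among all
states `ρ' = VρiV†` with `V` unitary, then `ρ` commutes with `A`. -/
theorem passive_and_maximally_active_states_are_incoherent
    {n : ℕ} (hn : 1 ≤ n) (A ρi : Matrix (Fin n) (Fin n) ℂ)
    (hA : A.IsHermitian) (hρi : IsDensity ρi)
    (U : Matrix (Fin n) (Fin n) ℂ) (hU : IsUnitary U)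
    (ρ : Matrix (Fin n) (Fin n) ℂ) (hρ : ρ = U * ρi * Uᴴ)
    (hext : (∀ V : Matrix (Fin n) (Fin n) ℂ, IsUnitary V →
                ((ρ * A).trace).re ≤ (((V * ρi * Vᴴ) * A).trace).re) ∨
            (∀ V : Matrix (Fin n) (Fin n) ℂ, IsUnitary V →
                (((V * ρi * Vᴴ) * A).trace).re ≤ ((ρ * A).trace).re)) :
    ρ * A = A * ρ :=
  passive_and_maximally_active_states_are_incoherent_general A ρi hA hρi U hU ρ hρ hext

end QSLPaper
end
end

section
/- Suppose ρ_i is not passive, and suppose the passivization time is attained: there are a continuous family H : [0,τ_pas] → {Hermitian n×n matrices} with tr(H(t)²) ≤ ω² for all t and a differentiable ρ : [0,τ_pas] → M_n(ℂ) with ρ(0) = ρ_i, ρ'(t) = -i[H(t),ρ(t)] for all t, and ρ(τ_pas) passive. Then tr(H(t)²) = ω² for every t ∈ [0,τ_pas] (time-optimal Hamiltonians saturate the bounded bandwidth condition). -/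
/-!
If a time-optimal Hamiltonian had `tr(H(t)²) < ω²` at some instant, then by continuity it would
stay below `ω²/(1+ε)²` on a whole interval `[a, b]`. Running the same protocol faster there,
along the time change `φ(s) = ∫₀ˢ p` with a continuous speed `1 ≤ p ≤ 1 + ε` that exceeds `1`
only while `φ(s) ∈ [a, b]`, gives the Hamiltonian `p(s) H(φ(s))`, which still respects the
bandwidth bound and reaches the same passive state in a strictly shorter time, contradicting
the minimality of the passivization time.
-/

open Matrix Kronecker
open scoped ComplexOrder

attribute [local instance] Matrix.frobeniusSeminormedAddCommGroup
  Matrix.frobeniusNormedAddCommGroup Matrix.frobeniusNormedSpace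

noncomputable section

theorem Matrix.IsHermitian.re_trace_mul_self_nonneg {ι : Type*} [Fintype ι]
    {H : Matrix ι ι ℂ} (hH : H.IsHermitian) : 0 ≤ (H * H).trace.re := by
  have := (posSemidef_conjTranspose_mul_self H).trace_nonneg
  rw [hH.eq] at this
  exact (Complex.nonneg_iff.mp this).1

theorem exists_pos_one_add_sq_mul_lt {x y : ℝ} (hxy : x < y) :
    ∃ ε > 0, (1 + ε) ^ 2 * x < y := by
  have hcont : Continuous fun ε : ℝ => (1 + ε) ^ 2 * x := by fun_prop
  have hlim := hcont.tendsto 0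
  simp only [add_zero, one_pow, one_mul] at hlim
  obtain ⟨ε, hε, hpos⟩ := ((eventually_nhdsWithin_of_eventually_nhds
    (hlim.eventually (gt_mem_nhds hxy))).and (self_mem_nhdsWithin (s := Set.Ioi 0))).exists
  exact ⟨ε, hpos, hε⟩

theorem exists_Icc_subset_of_mem_nhdsWithin_Icc {a b t : ℝ} (hab : a < b) (ht : t ∈ Set.Icc a b)
    {U : Set ℝ} (hU : U ∈ nhdsWithin t (Set.Icc a b)) :
    ∃ c d, a ≤ c ∧ c < d ∧ d ≤ b ∧ Set.Icc c d ⊆ U := by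
  obtain ⟨δ, hδ, hball⟩ := Metric.mem_nhdsWithin_iff.mp hU
  refine ⟨max (t - δ / 2) a, min (t + δ / 2) b, le_max_right _ _, ?_, min_le_right _ _, ?_⟩
  · apply max_lt <;> apply lt_min <;> linarith [ht.1, ht.2]
  · rintro u ⟨hcu, hud⟩
    have hlo := (le_max_left _ _).trans hcu
    have hhi := hud.trans (min_le_left _ _)
    refine hball ⟨?_, (le_max_right _ _).trans hcu, hud.trans (min_le_right _ _)⟩
    rw [Metric.mem_ball, Real.dist_eq, abs_lt]
    constructor <;> linarith

def tent (m h u : ℝ) : ℝ := max 0 (1 - |u - m| / h)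

theorem continuous_tent (m h : ℝ) : Continuous (tent m h) := by
  unfold tent; fun_prop

theorem tent_nonneg (m h u : ℝ) : 0 ≤ tent m h u := le_max_left _ _

theorem tent_le_one {h : ℝ} (hh : 0 ≤ h) (m u : ℝ) : tent m h u ≤ 1 :=
  max_le zero_le_one (sub_le_self _ (div_nonneg (abs_nonneg _) hh))

theorem tent_pos_iff {h : ℝ} (hh : 0 < h) {m u : ℝ} :
    0 < tent m h u ↔ u ∈ Set.Ioo (m - h) (m + h) := by
  rw [tent, lt_max_iff, sub_pos, div_lt_one hh, abs_sub_lt_iff, Set.mem_Ioo]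
  constructor
  · rintro (h0 | ⟨h₁, h₂⟩)
    · exact absurd h0 (lt_irrefl 0)
    · constructor <;> linarith
  · rintro ⟨h₁, h₂⟩
    exact Or.inr ⟨by linarith, by linarith⟩

theorem integral_tent_le {h : ℝ} (hh : 0 ≤ h) (m : ℝ) {s : ℝ} (hs : 0 ≤ s) :
    ∫ u in 0..s, tent m h u ≤ s :=
  calc ∫ u in 0..s, tent m h u ≤ ∫ _ in 0..s, (1 : ℝ) :=
        intervalIntegral.integral_mono_on hs ((continuous_tent m h).intervalIntegrable 0 s)
          intervalIntegrable_const fun u _ => tent_le_one hh m u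
    _ = s := by simp

theorem integral_tent_pos {m h τ : ℝ} (hh : 0 < h) (hm : 0 ≤ m - h) (hτ : m + h ≤ τ) :
    0 < ∫ u in 0..τ, tent m h u :=
  calc 0 < ∫ u in (m - h)..(m + h), tent m h u :=
        intervalIntegral.intervalIntegral_pos_of_pos_on
          ((continuous_tent m h).intervalIntegrable _ _) (fun _ hu => (tent_pos_iff hh).2 hu)
          (by linarith)
    _ ≤ ∫ u in 0..τ, tent m h u :=
        intervalIntegral.integral_mono_interval hm (by linarith) hτ
          (Filter.Eventually.of_forall fun u => tent_nonneg m h u)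
          ((continuous_tent m h).intervalIntegrable _ _)

theorem exists_speedup {a b τ ε : ℝ} (ha : 0 ≤ a) (hab : a < b) (hbτ : b ≤ τ) (hε : 0 < ε) :
    ∃ p : ℝ → ℝ, ∃ τ' ∈ Set.Ico 0 τ, Continuous p ∧ (∀ s, 1 ≤ p s ∧ p s ≤ 1 + ε) ∧
      ∫ u in 0..τ', p u = τ ∧
      ∀ s ∈ Set.Icc 0 τ', 1 < p s → ∫ u in 0..s, p u ∈ Set.Icc a b := by
  set h := (b - a) / 4 with h_def
  set m := a + h with m_def
  have hb : 0 < b := ha.trans_lt hab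
  have hh : 0 < h := by positivity
  set δ := min ε ((b - a) / (2 * b))
  have hδ : 0 < δ := lt_min hε (by positivity)
  -- `δ` is chosen so small that the speed-up cannot push the time change past `b`.
  have hδb : δ * b ≤ (b - a) / 2 :=
    calc δ * b ≤ (b - a) / (2 * b) * b := mul_le_mul_of_nonneg_right (min_le_right _ _) hb.le
      _ = (b - a) / 2 := by field_simp
  set G : ℝ → ℝ := fun s => ∫ u in 0..s, tent m h u
  have hint : ∀ x y, IntervalIntegrable (tent m h) MeasureTheory.volume x y :=
    (continuous_tent m h).intervalIntegrable
  have htime : ∀ s, ∫ u in 0..s, (1 + δ * tent m h u) = s + δ * G s := fun s => by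
    rw [intervalIntegral.integral_add intervalIntegrable_const ((hint 0 s).const_mul δ),
      intervalIntegral.integral_const_mul]
    simp [G]
  have hG_nonneg : ∀ s, 0 ≤ s → 0 ≤ G s := fun s hs =>
    intervalIntegral.integral_nonneg hs fun u _ => tent_nonneg m h u
  have hGτ : 0 < G τ := integral_tent_pos hh (by linarith) (by linarith)
  obtain ⟨τ', hτ'mem, hτ'⟩ := intermediate_value_Icc (ha.trans (hab.le.trans hbτ))
    (continuous_id.add ((intervalIntegral.continuous_primitive hint 0).const_mul δ)).continuousOn
    (show τ ∈ Set.Icc (0 + δ * G 0) (τ + δ * G τ) by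
      constructor <;> simp [G] <;> nlinarith)
  simp only [Pi.add_apply, id_eq] at hτ'
  refine ⟨fun u => 1 + δ * tent m h u, τ', ⟨hτ'mem.1, hτ'mem.2.lt_of_ne ?_⟩,
    continuous_const.add (continuous_const.mul (continuous_tent m h)), fun s => ⟨?_, ?_⟩,
    (htime τ').trans hτ', fun s hs hps => ?_⟩
  · rintro rfl
    linarith [mul_pos hδ hGτ]
  · linarith [mul_nonneg hδ.le (tent_nonneg m h s)]
  · linarith [mul_le_of_le_one_right hδ.le (tent_le_one hh.le m s),
      min_le_left ε ((b - a) / (2 * b))]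
  · have hs_mem := (tent_pos_iff hh).1
      (pos_of_mul_pos_right (by linarith : 0 < δ * tent m h s) hδ.le)
    have hGs : δ * G s ≤ δ * b :=
      mul_le_mul_of_nonneg_left ((integral_tent_le hh.le m hs.1).trans (by linarith [hs_mem.2]))
        hδ.le
    rw [htime]
    constructor
    · nlinarith [hG_nonneg s hs.1, hs_mem.1]
    · linarith [hs_mem.2]

theorem mapsTo_primitive_Icc {p : ℝ → ℝ} {τ : ℝ}
    (hpi : IntervalIntegrable p MeasureTheory.volume 0 τ) (hp : ∀ s ∈ Set.Icc 0 τ, 0 ≤ p s) :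
    Set.MapsTo (fun s => ∫ u in 0..s, p u) (Set.Icc 0 τ) (Set.Icc 0 (∫ u in 0..τ, p u)) :=
  fun _ hs => ⟨intervalIntegral.integral_nonneg hs.1 fun u hu => hp u ⟨hu.1, hu.2.trans hs.2⟩,
    intervalIntegral.integral_mono_interval le_rfl hs.1 hs.2
      ((MeasureTheory.ae_restrict_mem measurableSet_Ioc).mono fun u hu =>
        hp u (Set.Ioc_subset_Icc_self hu)) hpi⟩

namespace QSLPaper

theorem reachesIn_of_timeChange {ι : Type*} [Fintype ι] [DecidableEq ι]
    {ρ0 : Matrix ι ι ℂ} {final : Matrix ι ι ℂ → Prop} {b τ τ' : ℝ} {H ρ : ℝ → Matrix ι ι ℂ}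
    (hHc : ContinuousOn H (Set.Icc 0 τ)) (hHh : ∀ t ∈ Set.Icc (0:ℝ) τ, (H t).IsHermitian)
    (hρ0 : ρ 0 = ρ0)
    (hode : ∀ t ∈ Set.Icc (0:ℝ) τ,
      HasDerivWithinAt ρ ((-Complex.I) • (H t * ρ t - ρ t * H t)) (Set.Icc 0 τ) t)
    (hfin : final (ρ τ)) {p : ℝ → ℝ} (hpc : Continuous p)
    (hp : ∀ s ∈ Set.Icc 0 τ', 0 ≤ p s) (hτ' : ∫ u in 0..τ', p u = τ)
    (hb : ∀ s ∈ Set.Icc 0 τ',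
      p s ^ 2 * ((H (∫ u in 0..s, p u) * H (∫ u in 0..s, p u)).trace).re ≤ b) :
    ReachesIn ρ0 final b τ' := by
  set φ : ℝ → ℝ := fun s => ∫ u in 0..s, p u
  have hφ : ∀ s, HasDerivAt φ (p s) s := fun s => (hpc.integral_hasStrictDerivAt 0 s).hasDerivAt
  have hmaps : Set.MapsTo φ (Set.Icc 0 τ') (Set.Icc 0 τ) :=
    hτ' ▸ mapsTo_primitive_Icc (hpc.intervalIntegrable 0 τ') hp
  have hφc : Continuous φ := continuous_iff_continuousAt.2 fun s => (hφ s).continuousAt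
  refine ⟨fun s => (p s : ℂ) • H (φ s), fun s => ρ (φ s),
    (Complex.continuous_ofReal.comp hpc).continuousOn.smul (hHc.comp hφc.continuousOn hmaps),
    fun s hs => ?_, fun s hs => ?_, ?_, fun s hs => ?_, ?_⟩
  · rw [IsHermitian, conjTranspose_smul, Complex.star_def, Complex.conj_ofReal,
      (hHh _ (hmaps hs)).eq]
  · dsimp only
    rw [Matrix.smul_mul, Matrix.mul_smul, smul_smul, trace_smul, smul_eq_mul,
      ← Complex.ofReal_mul, Complex.re_ofReal_mul, ← sq]
    exact hb s hs
  · simp [φ, hρ0]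
  · refine ((hode _ (hmaps hs)).scomp s (hφ s).hasDerivWithinAt hmaps).congr_deriv ?_
    dsimp only
    rw [Matrix.smul_mul, Matrix.mul_smul, ← smul_sub, ← Complex.coe_smul]
    exact smul_comm _ _ _
  · simpa [φ, hτ'] using hfin

theorem time_optimal_hamiltonians_saturate_general
    {n : ℕ} (A ρi : Matrix (Fin n) (Fin n) ℂ)
    (ω : ℝ)
    (hnp : ¬ IsPassive A ρi ρi)
    (H ρ : ℝ → Matrix (Fin n) (Fin n) ℂ)
    (hHc : ContinuousOn H (Set.Icc 0 (tauPas A ρi ω)))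
    (hHh : ∀ t ∈ Set.Icc (0:ℝ) (tauPas A ρi ω), (H t).IsHermitian)
    (hHb : ∀ t ∈ Set.Icc (0:ℝ) (tauPas A ρi ω), ((H t * H t).trace).re ≤ ω^2)
    (hρ0 : ρ 0 = ρi)
    (hode : ∀ t ∈ Set.Icc (0:ℝ) (tauPas A ρi ω),
      HasDerivWithinAt ρ ((-Complex.I) • (H t * ρ t - ρ t * H t))
        (Set.Icc 0 (tauPas A ρi ω)) t)
    (hfin : IsPassive A ρi (ρ (tauPas A ρi ω))) :
    ∀ t ∈ Set.Icc (0:ℝ) (tauPas A ρi ω), ((H t * H t).trace).re = ω^2 := by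
  set τ := tauPas A ρi ω
  have hτ : 0 < τ := by
    refine (Real.sInf_nonneg fun _ h => h.1).lt_of_ne fun h => hnp ?_
    rwa [show τ = 0 from h.symm, hρ0] at hfin
  set f : ℝ → ℝ := fun t => ((H t * H t).trace).re
  have hfc : ContinuousOn f (Set.Icc 0 τ) :=
    (Complex.continuous_re.comp (continuous_id.matrix_mul continuous_id).matrix_trace
      ).comp_continuousOn hHc
  by_contra! ⟨t₀, ht₀, hne⟩
  obtain ⟨ε, hε, hεt₀⟩ := exists_pos_one_add_sq_mul_lt ((hHb t₀ ht₀).lt_of_ne hne)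
  obtain ⟨a, b, ha, hab, hbτ, hfab⟩ := exists_Icc_subset_of_mem_nhdsWithin_Icc hτ ht₀
    (((hfc t₀ ht₀).const_mul ((1 + ε) ^ 2)).eventually (gt_mem_nhds hεt₀))
  obtain ⟨p, τ', hτ', hpc, hp, hpτ, hpab⟩ := exists_speedup ha hab hbτ hε
  have hp0 : ∀ s ∈ Set.Icc 0 τ', 0 ≤ p s := fun s _ => zero_le_one.trans (hp s).1
  have hmaps := hpτ ▸ mapsTo_primitive_Icc (hpc.intervalIntegrable 0 τ') hp0
  have hreach : ReachesIn ρi (IsPassive A ρi) (ω ^ 2) τ' := by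
    refine reachesIn_of_timeChange hHc hHh hρ0 hode hfin hpc hp0 hpτ fun s hs => ?_
    rcases (hp s).1.eq_or_lt with h1 | h1
    · rw [← h1, one_pow, one_mul]
      exact hHb _ (hmaps hs)
    · have := (hHh _ (hmaps hs)).re_trace_mul_self_nonneg
      calc p s ^ 2 * f (∫ u in 0..s, p u) ≤ (1 + ε) ^ 2 * f (∫ u in 0..s, p u) := by
            gcongr
            exact (hp s).2
        _ ≤ ω ^ 2 := (hfab (hpab s hs h1)).le
  have hττ' : τ ≤ τ' := csInf_le ⟨0, fun _ h => h.1⟩ ⟨hτ'.1, hreach⟩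
  exact hττ'.not_gt hτ'.2

/-- time-optimal Hamiltonians saturate the bounded bandwidth condition. -/
theorem time_optimal_hamiltonians_saturate
    {n : ℕ} (hn : 1 ≤ n) (A ρi : Matrix (Fin n) (Fin n) ℂ)
    (hA : A.IsHermitian) (hρi : IsDensity ρi) (hcomm : A * ρi = ρi * A)
    (ω : ℝ) (hω : 0 < ω)
    (hnp : ¬ IsPassive A ρi ρi)
    (H ρ : ℝ → Matrix (Fin n) (Fin n) ℂ)
    (hHc : ContinuousOn H (Set.Icc 0 (tauPas A ρi ω)))
    (hHh : ∀ t ∈ Set.Icc (0:ℝ) (tauPas A ρi ω), (H t).IsHermitian)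
    (hHb : ∀ t ∈ Set.Icc (0:ℝ) (tauPas A ρi ω), ((H t * H t).trace).re ≤ ω^2)
    (hρ0 : ρ 0 = ρi)
    (hode : ∀ t ∈ Set.Icc (0:ℝ) (tauPas A ρi ω),
      HasDerivWithinAt ρ ((-Complex.I) • (H t * ρ t - ρ t * H t))
        (Set.Icc 0 (tauPas A ρi ω)) t)
    (hfin : IsPassive A ρi (ρ (tauPas A ρi ω))) :
    ∀ t ∈ Set.Icc (0:ℝ) (tauPas A ρi ω), ((H t * H t).trace).re = ω^2 :=
  time_optimal_hamiltonians_saturate_general A ρi ω hnp H ρ hHc hHh hHb hρ0 hode hfin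

end QSLPaper
end
end

section
/- Suppose ρ_i is not passive. Let H : [0,τ_pas] → {Hermitian n×n matrices} be continuous with tr(H(t)²) ≤ ω² for all t, and let U : [0,τ_pas] → M_n(ℂ) solve U'(t) = -iH(t)U(t) with U(0) = 1 and U(τ_pas) ∈ P(ρ_i) (so H is time-optimal). Then for every τ' ≥ 0 and every continuously differentiable path γ : [0,τ'] → M_n(ℂ) with γ(t) unitary for all t, γ(0) = 1 and γ(τ') ∈ P(ρ_i), one has ∫₀^{τ'} ‖γ'(t)‖_F dt ≥ ∫₀^{τ_pas} ‖U'(t)‖_F dt, where ‖·‖_F is the Frobenius (Hilbert–Schmidt) norm; i.e., the time-evolution operator of a time-optimal Hamiltonian is a shortest curve from the identity to P(ρ_i). -/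
/-!
Along a Schrödinger evolution `U' = -i H U` with `H` Hermitian, `U` stays unitary, so
`‖U'‖_F = ‖H‖_F ≤ ω` and the length of `U` on `[0, τ_pas]` is at most `ω τ_pas`.
Conversely, a unitary path `γ` from `1` to `P(ρi)` of length `L`, reparametrised to speed at most
`ω`, is the evolution generated by the Hermitian `H = i Γ' Γᴴ`, with `‖H‖_F = ‖Γ'‖_F ≤ ω`; it drives
`ρi` to a passive state, so `ω τ_pas ≤ L`. The reparametrisation uses the positive speed
`‖γ'‖ + δ`, which costs an extra `δ τ'` in time, and `δ → 0` at the end.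
-/

open Matrix Kronecker
open scoped ComplexOrder

attribute [local instance] Matrix.frobeniusSeminormedAddCommGroup
  Matrix.frobeniusNormedAddCommGroup Matrix.frobeniusNormedSpace

noncomputable section

namespace QSLPaper

/-- The Frobenius (Hilbert–Schmidt) norm of a matrix. -/
def frob {ι : Type*} [Fintype ι] (M : Matrix ι ι ℂ) : ℝ :=
  Real.sqrt (∑ i, ∑ j, ‖M i j‖ ^ 2)

section Frobenius

variable {m ι : Type*} [Fintype m] [Fintype ι]

theorem frob_eq_norm (M : Matrix ι ι ℂ) : frob M = ‖M‖ := by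
  rw [frob, Matrix.frobenius_norm_def, ← Real.sqrt_eq_rpow]
  simp only [Real.rpow_two]

theorem re_trace_conjTranspose_mul_self (M : Matrix m ι ℂ) :
    (Mᴴ * M).trace.re = ‖M‖ ^ 2 := by
  rw [Matrix.frobenius_norm_def, ← Real.sqrt_eq_rpow, Real.sq_sqrt (by positivity),
    Finset.sum_comm]
  simp only [Matrix.trace, Matrix.diag, Matrix.mul_apply, Matrix.conjTranspose_apply,
    RCLike.star_def, Complex.conj_mul', Complex.re_sum, Real.rpow_two]
  norm_cast

theorem re_trace_mul_self_of_isHermitian {H : Matrix ι ι ℂ} (hH : H.IsHermitian) :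
    (H * H).trace.re = ‖H‖ ^ 2 := by
  rw [← re_trace_conjTranspose_mul_self, hH.eq]

variable [DecidableEq ι]

theorem IsUnitary.mul_conjTranspose_self {U : Matrix ι ι ℂ} (hU : IsUnitary U) : U * Uᴴ = 1 :=
  mul_eq_one_comm.mp hU

theorem IsUnitary.conjTranspose {U : Matrix ι ι ℂ} (hU : IsUnitary U) : IsUnitary Uᴴ := by
  rw [IsUnitary, Matrix.conjTranspose_conjTranspose]
  exact hU.mul_conjTranspose_self

theorem norm_mul_of_isUnitary (M : Matrix m ι ℂ) {U : Matrix ι ι ℂ} (hU : IsUnitary U) :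
    ‖M * U‖ = ‖M‖ := by
  have htrace : ((M * U)ᴴ * (M * U)).trace = (Mᴴ * M).trace := by
    rw [Matrix.conjTranspose_mul, Matrix.mul_assoc, Matrix.trace_mul_comm, Matrix.mul_assoc,
      Matrix.mul_assoc, hU.mul_conjTranspose_self, Matrix.mul_one]
  have hsq := re_trace_conjTranspose_mul_self (M * U)
  rw [htrace, re_trace_conjTranspose_mul_self] at hsq
  exact ((pow_left_inj₀ (norm_nonneg _) (norm_nonneg _) two_ne_zero).mp hsq).symm

end Frobenius

theorem _root_.HasDerivWithinAt.matrix_mul {ι : Type*} [Fintype ι] [DecidableEq ι]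
    {f g : ℝ → Matrix ι ι ℂ} {f' g' : Matrix ι ι ℂ} {s : Set ℝ} {x : ℝ}
    (hf : HasDerivWithinAt f f' s x) (hg : HasDerivWithinAt g g' s x) :
    HasDerivWithinAt (fun t => f t * g t) (f' * g x + f x * g') s x := by
  let : NormedRing (Matrix ι ι ℂ) := Matrix.frobeniusNormedRing
  let : NormedAlgebra ℝ (Matrix ι ι ℂ) := Matrix.frobeniusNormedAlgebra
  exact hf.mul hg

theorem _root_.HasDerivWithinAt.matrix_conjTranspose {ι : Type*} [Fintype ι] {f : ℝ → Matrix ι ι ℂ}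
    {f' : Matrix ι ι ℂ} {s : Set ℝ} {x : ℝ} (hf : HasDerivWithinAt f f' s x) :
    HasDerivWithinAt (fun t => (f t)ᴴ) f'ᴴ s x :=
  hf.star

theorem constant_of_hasDerivWithinAt_Icc_zero {E : Type*} [NormedAddCommGroup E] [NormedSpace ℝ E]
    {f : ℝ → E} {a b : ℝ} (h : ∀ t ∈ Set.Icc a b, HasDerivWithinAt f 0 (Set.Icc a b) t) :
    ∀ t ∈ Set.Icc a b, f t = f a :=
  constant_of_has_deriv_right_zero (fun t ht => (h t ht).continuousWithinAt) fun t ht =>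
    ((h t (Set.Ico_subset_Icc_self ht)).mono (Set.Icc_subset_Icc_left ht.1)).mono_of_mem_nhdsWithin
      (Icc_mem_nhdsGE ht.2)

section Schrodinger

theorem conjTranspose_neg_I_smul_mul_of_isHermitian {ι : Type*} [Fintype ι] {H U : Matrix ι ι ℂ}
    (hH : H.IsHermitian) : ((-Complex.I) • (H * U))ᴴ = Complex.I • (Uᴴ * H) := by
  simp [Matrix.conjTranspose_smul, Matrix.conjTranspose_mul, hH.eq]

variable {ι : Type*} [Fintype ι] [DecidableEq ι] {H U : ℝ → Matrix ι ι ℂ}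

theorem isUnitary_of_schrodinger {T : ℝ} (hH : ∀ t ∈ Set.Icc 0 T, (H t).IsHermitian)
    (hU0 : U 0 = 1)
    (hU : ∀ t ∈ Set.Icc 0 T, HasDerivWithinAt U ((-Complex.I) • (H t * U t)) (Set.Icc 0 T) t) :
    ∀ t ∈ Set.Icc 0 T, IsUnitary (U t) := by
  have hconst : ∀ t ∈ Set.Icc 0 T,
      HasDerivWithinAt (fun t => (U t)ᴴ * U t) 0 (Set.Icc 0 T) t := by
    intro t ht
    convert (hU t ht).matrix_conjTranspose.matrix_mul (hU t ht) using 1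
    rw [conjTranspose_neg_I_smul_mul_of_isHermitian (hH t ht)]
    simp [Matrix.mul_assoc]
  intro t ht
  rw [IsUnitary, constant_of_hasDerivWithinAt_Icc_zero hconst t ht, hU0, Matrix.conjTranspose_one,
    Matrix.one_mul]

theorem hasDerivWithinAt_conj_of_schrodinger (ρ0 : Matrix ι ι ℂ) {s : Set ℝ} {t : ℝ}
    (hH : (H t).IsHermitian) (hU : HasDerivWithinAt U ((-Complex.I) • (H t * U t)) s t) :
    HasDerivWithinAt (fun t => U t * ρ0 * (U t)ᴴ)
      ((-Complex.I) • (H t * (U t * ρ0 * (U t)ᴴ) - U t * ρ0 * (U t)ᴴ * H t)) s t := by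
  convert (hU.matrix_mul (hasDerivWithinAt_const t s ρ0)).matrix_mul hU.matrix_conjTranspose using 1
  rw [conjTranspose_neg_I_smul_mul_of_isHermitian hH]
  simp only [Matrix.mul_zero, add_zero, neg_smul, Matrix.neg_mul, smul_mul_assoc, mul_smul_comm,
    Matrix.mul_assoc]
  module

end Schrodinger

section UnitaryPath

variable {ι : Type*} [Fintype ι] [DecidableEq ι] {Γ D : ℝ → Matrix ι ι ℂ} {T : ℝ}

theorem isHermitian_I_smul_mul_conjTranspose (hT : 0 < T)
    (hΓ : ∀ t ∈ Set.Icc 0 T, HasDerivWithinAt Γ (D t) (Set.Icc 0 T) t)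
    (hΓu : ∀ t ∈ Set.Icc 0 T, IsUnitary (Γ t)) {t : ℝ} (ht : t ∈ Set.Icc 0 T) :
    (Complex.I • (D t * (Γ t)ᴴ)).IsHermitian := by
  have hconst : HasDerivWithinAt (fun t => Γ t * (Γ t)ᴴ) 0 (Set.Icc 0 T) t :=
    (hasDerivWithinAt_const t (Set.Icc 0 T) (1 : Matrix ι ι ℂ)).congr
      (fun s hs => (hΓu s hs).mul_conjTranspose_self) (hΓu t ht).mul_conjTranspose_self
  have hprod := (hΓ t ht).matrix_mul (hΓ t ht).matrix_conjTranspose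
  have hskew : D t * (Γ t)ᴴ + Γ t * (D t)ᴴ = 0 :=
    (uniqueDiffOn_Icc hT t ht).eq_deriv (Set.Icc 0 T) hprod hconst
  rw [Matrix.IsHermitian, Matrix.conjTranspose_smul, Matrix.conjTranspose_mul,
    Matrix.conjTranspose_conjTranspose, eq_neg_of_add_eq_zero_right hskew]
  simp

theorem reachesIn_of_unitary_path {ρ0 : Matrix ι ι ℂ} {final : Matrix ι ι ℂ → Prop} {ω : ℝ}
    (hT : 0 < T) (hΓ : ∀ t ∈ Set.Icc 0 T, HasDerivWithinAt Γ (D t) (Set.Icc 0 T) t)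
    (hD : ContinuousOn D (Set.Icc 0 T)) (hΓu : ∀ t ∈ Set.Icc 0 T, IsUnitary (Γ t))
    (hΓ0 : Γ 0 = 1) (hDω : ∀ t ∈ Set.Icc 0 T, ‖D t‖ ≤ ω)
    (hfinal : final (Γ T * ρ0 * (Γ T)ᴴ)) :
    ReachesIn ρ0 final (ω ^ 2) T := by
  set H := fun t => Complex.I • (D t * (Γ t)ᴴ)
  have hH : ∀ t ∈ Set.Icc 0 T, (H t).IsHermitian := fun t ht =>
    isHermitian_I_smul_mul_conjTranspose hT hΓ hΓu ht
  have hschrodinger : ∀ t ∈ Set.Icc 0 T,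
      HasDerivWithinAt Γ ((-Complex.I) • (H t * Γ t)) (Set.Icc 0 T) t := by
    intro t ht
    convert hΓ t ht using 1
    simp only [H, smul_mul_assoc, smul_smul, Matrix.mul_assoc]
    rw [show (Γ t)ᴴ * Γ t = 1 from hΓu t ht]
    simp
  have hΓc : ContinuousOn Γ (Set.Icc 0 T) := fun t ht => (hΓ t ht).continuousWithinAt
  refine ⟨H, fun t => Γ t * ρ0 * (Γ t)ᴴ, ?_, hH, fun t ht => ?_, by simp [hΓ0],
    fun t ht => hasDerivWithinAt_conj_of_schrodinger ρ0 (hH t ht) (hschrodinger t ht), hfinal⟩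
  · exact (hD.mul (hΓc.star : ContinuousOn (fun t => (Γ t)ᴴ) _)).const_smul Complex.I
  · rw [re_trace_mul_self_of_isHermitian (hH t ht), norm_smul, Complex.norm_I, one_mul,
      norm_mul_of_isUnitary _ (hΓu t ht).conjTranspose]
    exact pow_le_pow_left₀ (norm_nonneg _) (hDω t ht) 2

end UnitaryPath

theorem surjective_integral_of_le {g : ℝ → ℝ} {δ : ℝ} (hg : Continuous g) (hδ : 0 < δ)
    (hgδ : ∀ t, δ ≤ g t) : Function.Surjective fun t => ∫ u in (0:ℝ)..t, g u := by
  set s := fun t => ∫ u in (0:ℝ)..t, g u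
  have hs : ∀ t, HasDerivAt s (g t) t := fun t => (hg.integral_hasStrictDerivAt 0 t).hasDerivAt
  -- `s t - δ t` is monotone and vanishes at `0`, so `s` grows at least linearly both ways
  have hmono : Monotone fun t => s t - δ * t :=
    monotone_of_hasDerivAt_nonneg (fun t => (hs t).sub ((hasDerivAt_id t).const_mul δ))
      fun t => by simpa using hgδ t
  have hs0 : s 0 = 0 := intervalIntegral.integral_same
  refine (continuous_iff_continuousAt.2 fun t => (hs t).continuousAt).surjective ?_ ?_
  · refine Filter.tendsto_atTop_mono' _ ?_ (Filter.tendsto_id.const_mul_atTop hδ)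
    filter_upwards [Filter.eventually_ge_atTop 0] with t ht
    simpa [hs0] using hmono ht
  · refine Filter.tendsto_atBot_mono' _ ?_ (Filter.tendsto_id.const_mul_atBot hδ)
    filter_upwards [Filter.eventually_le_atBot 0] with t ht
    simpa [hs0] using hmono ht

theorem exists_hasDerivAt_inverse_integral {g : ℝ → ℝ} {δ : ℝ} (hg : Continuous g) (hδ : 0 < δ)
    (hgδ : ∀ t, δ ≤ g t) :
    ∃ φ : ℝ → ℝ, Monotone φ ∧ (∀ t, φ (∫ u in (0:ℝ)..t, g u) = t) ∧
      ∀ y, HasDerivAt φ (g (φ y))⁻¹ y := by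
  have hs : ∀ t, HasDerivAt (fun t => ∫ u in (0:ℝ)..t, g u) (g t) t := fun t =>
    (hg.integral_hasStrictDerivAt 0 t).hasDerivAt
  have hmono := strictMono_of_hasDerivAt_pos hs fun t => hδ.trans_le (hgδ t)
  set e := hmono.orderIsoOfSurjective _ (surjective_integral_of_le hg hδ hgδ)
  refine ⟨e.symm, e.symm.monotone, e.symm_apply_apply, fun y => ?_⟩
  exact (hs _).of_local_left_inverse e.symm.continuous.continuousAt
    (hδ.trans_le (hgδ _)).ne' (Filter.Eventually.of_forall e.apply_symm_apply)

theorem exists_reparametrization_speed_le {f : ℝ → ℝ} {τ δ ω : ℝ} (hτ : 0 < τ) (hδ : 0 < δ)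
    (hω : 0 < ω) (hf : ContinuousOn f (Set.Icc 0 τ)) (hf0 : ∀ t ∈ Set.Icc 0 τ, 0 ≤ f t) :
    ∃ ψ ψ' : ℝ → ℝ, ψ 0 = 0 ∧ ψ (((∫ t in (0:ℝ)..τ, f t) + δ * τ) / ω) = τ ∧
      Set.MapsTo ψ (Set.Icc 0 (((∫ t in (0:ℝ)..τ, f t) + δ * τ) / ω)) (Set.Icc 0 τ) ∧
      (∀ u, HasDerivAt ψ (ψ' u) u) ∧ Continuous ψ' ∧
      ∀ u ∈ Set.Icc 0 (((∫ t in (0:ℝ)..τ, f t) + δ * τ) / ω), |ψ' u| * f (ψ u) ≤ ω := by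
  set T := ((∫ t in (0:ℝ)..τ, f t) + δ * τ) / ω
  set proj : ℝ → ℝ := fun t => Set.projIcc 0 τ hτ.le t
  -- bounded below by `δ`, so that its primitive is invertible
  set g : ℝ → ℝ := fun t => f (proj t) + δ
  have hg : Continuous g :=
    (hf.comp_continuous (continuous_subtype_val.comp continuous_projIcc)
      fun t => (Set.projIcc 0 τ hτ.le t).2).add continuous_const
  have hgδ : ∀ t, δ ≤ g t := fun t =>
    le_add_of_nonneg_left (hf0 _ (Set.projIcc 0 τ hτ.le t).2)
  have hgf : ∀ t ∈ Set.Icc 0 τ, g t = f t + δ := fun t ht => by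
    simp [g, proj, Set.projIcc_of_mem hτ.le ht]
  have hgτ : ∫ t in (0:ℝ)..τ, g t = ω * T := by
    rw [mul_div_cancel₀ _ hω.ne', intervalIntegral.integral_congr (g := fun t => f t + δ)
      fun t ht => hgf t (Set.uIcc_of_le hτ.le ▸ ht), intervalIntegral.integral_add
      (hf.intervalIntegrable_of_Icc hτ.le) intervalIntegrable_const]
    simp [mul_comm]
  obtain ⟨φ, hφmono, hφs, hφ⟩ := exists_hasDerivAt_inverse_integral hg hδ hgδ
  have hφ0 : φ 0 = 0 := by simpa using hφs 0
  have hφτ : φ (ω * T) = τ := hgτ ▸ hφs τ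
  have hmaps : Set.MapsTo (fun u => φ (ω * u)) (Set.Icc 0 T) (Set.Icc 0 τ) := fun u hu =>
    ⟨hφ0 ▸ hφmono (by nlinarith [hu.1]), hφτ ▸ hφmono (by nlinarith [hu.2])⟩
  refine ⟨fun u => φ (ω * u), fun u => ω / g (φ (ω * u)), by simpa using hφ0, hφτ, hmaps,
    fun u => ?_, ?_, fun u hu => ?_⟩
  · change HasDerivAt _ (ω / g (φ (ω * u))) u
    rw [div_eq_inv_mul]
    exact (hφ (ω * u)).comp u (by simpa using (hasDerivAt_id u).const_mul ω)
  · have hφc : Continuous φ := continuous_iff_continuousAt.2 fun y => (hφ y).continuousAt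
    exact continuous_const.div (hg.comp (hφc.comp (continuous_const_mul ω)))
      fun u => (hδ.trans_le (hgδ _)).ne'
  · change |ω / g (φ (ω * u))| * f (φ (ω * u)) ≤ ω
    rw [hgf _ (hmaps hu), abs_div, abs_of_pos hω, abs_of_pos (by linarith [hf0 _ (hmaps hu)]),
      div_mul_eq_mul_div, div_le_iff₀ (by linarith [hf0 _ (hmaps hu)])]
    nlinarith [hf0 _ (hmaps hu)]

section Passivization

variable {ι : Type*} [Fintype ι] [DecidableEq ι]

theorem reachesIn_of_path {ρ0 : Matrix ι ι ℂ} {final : Matrix ι ι ℂ → Prop}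
    {γ γ' : ℝ → Matrix ι ι ℂ} {τ δ ω : ℝ} (hτ : 0 < τ) (hδ : 0 < δ) (hω : 0 < ω)
    (hγ : ∀ t ∈ Set.Icc 0 τ, HasDerivWithinAt γ (γ' t) (Set.Icc 0 τ) t)
    (hγ' : ContinuousOn γ' (Set.Icc 0 τ)) (hγu : ∀ t ∈ Set.Icc 0 τ, IsUnitary (γ t))
    (hγ0 : γ 0 = 1) (hfinal : final (γ τ * ρ0 * (γ τ)ᴴ)) :
    ReachesIn ρ0 final (ω ^ 2) (((∫ t in (0:ℝ)..τ, ‖γ' t‖) + δ * τ) / ω) := by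
  obtain ⟨ψ, ψ', hψ0, hψT, hmaps, hψ, hψ'c, hspeed⟩ :=
    exists_reparametrization_speed_le hτ hδ hω hγ'.norm fun _ _ => norm_nonneg _
  have hT : 0 < ((∫ t in (0:ℝ)..τ, ‖γ' t‖) + δ * τ) / ω := by
    have : 0 ≤ ∫ t in (0:ℝ)..τ, ‖γ' t‖ :=
      intervalIntegral.integral_nonneg hτ.le fun t _ => norm_nonneg _
    positivity
  have hψc : Continuous ψ := continuous_iff_continuousAt.2 fun u => (hψ u).continuousAt
  refine reachesIn_of_unitary_path (Γ := fun u => γ (ψ u)) (D := fun u => ψ' u • γ' (ψ u)) hT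
    (fun u hu => (hγ (ψ u) (hmaps hu)).scomp u (hψ u).hasDerivWithinAt hmaps)
    (hψ'c.continuousOn.smul (hγ'.comp hψc.continuousOn hmaps)) (fun u hu => hγu _ (hmaps hu))
    (by simp [hψ0, hγ0]) (fun u hu => ?_) (by simpa [hψT] using hfinal)
  rw [norm_smul, Real.norm_eq_abs]
  exact hspeed u hu

theorem mul_tauPas_le_integral_norm {A ρi : Matrix ι ι ℂ} {γ γ' : ℝ → Matrix ι ι ℂ} {τ ω : ℝ}
    (hτ : 0 < τ) (hω : 0 < ω)
    (hγ : ∀ t ∈ Set.Icc 0 τ, HasDerivWithinAt γ (γ' t) (Set.Icc 0 τ) t)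
    (hγ' : ContinuousOn γ' (Set.Icc 0 τ)) (hγu : ∀ t ∈ Set.Icc 0 τ, IsUnitary (γ t))
    (hγ0 : γ 0 = 1) (hfinal : γ τ ∈ PassivizingSet A ρi) :
    ω * tauPas A ρi ω ≤ ∫ t in (0:ℝ)..τ, ‖γ' t‖ := by
  refine le_of_forall_pos_le_add fun ε hε => ?_
  have hreach := reachesIn_of_path (δ := ε / τ) hτ (div_pos hε hτ) hω hγ hγ' hγu hγ0 hfinal.2
  have hL : 0 ≤ ∫ t in (0:ℝ)..τ, ‖γ' t‖ :=
    intervalIntegral.integral_nonneg hτ.le fun t _ => norm_nonneg _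
  have hle : tauPas A ρi ω ≤ ((∫ t in (0:ℝ)..τ, ‖γ' t‖) + ε / τ * τ) / ω :=
    csInf_le ⟨0, fun _ h => h.1⟩ ⟨by positivity, hreach⟩
  rwa [div_mul_cancel₀ _ hτ.ne', le_div_iff₀' hω] at hle

theorem integral_norm_schrodinger_le {H U : ℝ → Matrix ι ι ℂ} {T ω : ℝ} (hT : 0 ≤ T)
    (hω : 0 ≤ ω) (hH : ∀ t ∈ Set.Icc 0 T, (H t).IsHermitian)
    (hHω : ∀ t ∈ Set.Icc 0 T, (H t * H t).trace.re ≤ ω ^ 2) (hU0 : U 0 = 1)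
    (hU : ∀ t ∈ Set.Icc 0 T, HasDerivWithinAt U ((-Complex.I) • (H t * U t)) (Set.Icc 0 T) t) :
    ∫ t in (0:ℝ)..T, ‖(-Complex.I) • (H t * U t)‖ ≤ ω * T := by
  have hUu := isUnitary_of_schrodinger hH hU0 hU
  have hbound : ∀ t ∈ Set.uIoc 0 T, ‖‖(-Complex.I) • (H t * U t)‖‖ ≤ ω := by
    intro t ht
    have ht' : t ∈ Set.Icc 0 T := Set.Ioc_subset_Icc_self (Set.uIoc_of_le hT ▸ ht)
    rw [norm_norm, norm_smul, norm_neg, Complex.norm_I, one_mul,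
      norm_mul_of_isUnitary _ (hUu t ht'), ← pow_le_pow_iff_left₀ (norm_nonneg _) hω two_ne_zero,
      ← re_trace_mul_self_of_isHermitian (hH t ht')]
    exact hHω t ht'
  calc ∫ t in (0:ℝ)..T, ‖(-Complex.I) • (H t * U t)‖
      ≤ ‖∫ t in (0:ℝ)..T, ‖(-Complex.I) • (H t * U t)‖‖ := Real.le_norm_self _
    _ ≤ ω * |T - 0| := intervalIntegral.norm_integral_le_of_norm_le_const hbound
    _ = ω * T := by rw [sub_zero, abs_of_nonneg hT]

end Passivization

theorem time_evolution_of_time_optimal_hamiltonian_is_shortest_general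
    {n : ℕ} (A ρi : Matrix (Fin n) (Fin n) ℂ)
    (ω : ℝ) (hω : 0 < ω)
    (hnp : ¬ IsPassive A ρi ρi)
    (H U : ℝ → Matrix (Fin n) (Fin n) ℂ)
    (hHh : ∀ t ∈ Set.Icc (0:ℝ) (tauPas A ρi ω), (H t).IsHermitian)
    (hHb : ∀ t ∈ Set.Icc (0:ℝ) (tauPas A ρi ω), ((H t * H t).trace).re ≤ ω^2)
    (hU0 : U 0 = 1)
    (hUode : ∀ t ∈ Set.Icc (0:ℝ) (tauPas A ρi ω),
      HasDerivWithinAt U ((-Complex.I) • (H t * U t)) (Set.Icc 0 (tauPas A ρi ω)) t) :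
    ∀ (τ' : ℝ), 0 ≤ τ' → ∀ γ γ' : ℝ → Matrix (Fin n) (Fin n) ℂ,
      (∀ t ∈ Set.Icc (0:ℝ) τ', HasDerivWithinAt γ (γ' t) (Set.Icc 0 τ') t) →
      ContinuousOn γ' (Set.Icc 0 τ') →
      (∀ t ∈ Set.Icc (0:ℝ) τ', IsUnitary (γ t)) →
      γ 0 = 1 → γ τ' ∈ PassivizingSet A ρi →
      (∫ t in (0:ℝ)..τ', frob (γ' t)) ≥
        ∫ t in (0:ℝ)..(tauPas A ρi ω), frob ((-Complex.I) • (H t * U t)) := by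
  intro τ' hτ' γ γ' hγ hγ' hγu hγ0 hγfin
  have hτ'pos : 0 < τ' := by
    refine hτ'.lt_of_ne fun h => hnp ?_
    simpa [← h, hγ0] using hγfin.2
  simp only [frob_eq_norm, ge_iff_le]
  calc ∫ t in (0:ℝ)..(tauPas A ρi ω), ‖(-Complex.I) • (H t * U t)‖
      ≤ ω * tauPas A ρi ω :=
        integral_norm_schrodinger_le (Real.sInf_nonneg fun _ h => h.1) hω.le hHh hHb hU0 hUode
    _ ≤ ∫ t in (0:ℝ)..τ', ‖γ' t‖ := mul_tauPas_le_integral_norm hτ'pos hω hγ hγ' hγu hγ0 hγfin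

/-- the time-evolution operator of a time-optimal Hamiltonian is a shortest
curve from the identity to `P(ρi)`. -/
theorem time_evolution_of_time_optimal_hamiltonian_is_shortest
    {n : ℕ} (hn : 1 ≤ n) (A ρi : Matrix (Fin n) (Fin n) ℂ)
    (hA : A.IsHermitian) (hρi : IsDensity ρi) (hcomm : A * ρi = ρi * A)
    (ω : ℝ) (hω : 0 < ω)
    (hnp : ¬ IsPassive A ρi ρi)
    (H U : ℝ → Matrix (Fin n) (Fin n) ℂ)
    (hHc : ContinuousOn H (Set.Icc 0 (tauPas A ρi ω)))
    (hHh : ∀ t ∈ Set.Icc (0:ℝ) (tauPas A ρi ω), (H t).IsHermitian)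
    (hHb : ∀ t ∈ Set.Icc (0:ℝ) (tauPas A ρi ω), ((H t * H t).trace).re ≤ ω^2)
    (hU0 : U 0 = 1)
    (hUode : ∀ t ∈ Set.Icc (0:ℝ) (tauPas A ρi ω),
      HasDerivWithinAt U ((-Complex.I) • (H t * U t)) (Set.Icc 0 (tauPas A ρi ω)) t)
    (hUfin : U (tauPas A ρi ω) ∈ PassivizingSet A ρi) :
    ∀ (τ' : ℝ), 0 ≤ τ' → ∀ γ γ' : ℝ → Matrix (Fin n) (Fin n) ℂ,
      (∀ t ∈ Set.Icc (0:ℝ) τ', HasDerivWithinAt γ (γ' t) (Set.Icc 0 τ') t) →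
      ContinuousOn γ' (Set.Icc 0 τ') →
      (∀ t ∈ Set.Icc (0:ℝ) τ', IsUnitary (γ t)) →
      γ 0 = 1 → γ τ' ∈ PassivizingSet A ρi →
      (∫ t in (0:ℝ)..τ', frob (γ' t)) ≥
        ∫ t in (0:ℝ)..(tauPas A ρi ω), frob ((-Complex.I) • (H t * U t)) :=
  time_evolution_of_time_optimal_hamiltonian_is_shortest_general A ρi ω hω hnp H U hHh hHb hU0 hUode

end QSLPaper
end
end

section
/- Suppose ρ_i is not passive, and let H be an n×n Hermitian matrix with tr(H²) = ω² such that exp(-iτ_pas·H)·ρ_i·exp(iτ_pas·H) is passive (i.e., H is a time-independent time-optimal Hamiltonian). Then H is parallel transporting and completely incompatible with A: for every eigenvalue a of A, the orthogonal projection Π_a onto the eigenspace ker(A − a) satisfies Π_a H Π_a = 0, and for every eigenvalue p of ρ_i, the orthogonal projection Π_p onto ker(ρ_i − p) satisfies Π_p H Π_p = 0. -/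
open Matrix Kronecker
open scoped ComplexOrder

attribute [local instance] Matrix.frobeniusSeminormedAddCommGroup
  Matrix.frobeniusNormedAddCommGroup Matrix.frobeniusNormedSpace

noncomputable section

namespace QSLPaper

/-!
Let `D = P H P` be a compression of `H` onto an eigenspace of `A` or of `ρi`; it is Hermitian,
commutes with `A` (resp. `ρi`) and satisfies `tr(HD) = tr(D²)`, so `tr((H - D)²) = ω² - tr(D²)`.
If `D ≠ 0`, the evolution `e^{-itH} e^{itD}` (resp. `e^{itD} e^{-itH}`) is driven by conjugates
of `H - D`, a strictly smaller bandwidth, and at time `τ_pas` it reaches `e^{-iτH} ρi e^{iτH}`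
(resp. a state of the same energy), which is passive. Running this protocol faster at full
bandwidth `ω²` reaches a passive state strictly before `τ_pas > 0`, a contradiction.
-/

section Propagator

attribute [local instance] Matrix.frobeniusNormedRing Matrix.frobeniusNormedAlgebra

variable {ι : Type*} [Fintype ι] [DecidableEq ι]

def propagator (X : Matrix ι ι ℂ) (t : ℝ) : Matrix ι ι ℂ :=
  NormedSpace.exp ((-Complex.I * t) • X)

lemma propagator_eq_exp_smul (X : Matrix ι ι ℂ) (t : ℝ) :
    propagator X t = NormedSpace.exp (t • (-Complex.I) • X) := by
  rw [propagator, ← smul_assoc, Complex.real_smul, mul_comm]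

@[simp]
lemma propagator_zero (X : Matrix ι ι ℂ) : propagator X 0 = 1 := by
  simp [propagator]

lemma hasDerivAt_propagator (X : Matrix ι ι ℂ) (t : ℝ) :
    HasDerivAt (propagator X) ((-Complex.I) • (X * propagator X t)) t := by
  rw [funext (propagator_eq_exp_smul X), ← smul_mul_assoc]
  exact hasDerivAt_exp_smul_const' ((-Complex.I) • X) t

lemma continuous_propagator (X : Matrix ι ι ℂ) : Continuous (propagator X) :=
  continuous_iff_continuousAt.2 fun t => (hasDerivAt_propagator X t).continuousAt

lemma Commute.propagator_right {Z X : Matrix ι ι ℂ} (h : Commute Z X) (t : ℝ) :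
    Commute Z (propagator X t) :=
  (h.smul_right _).exp_right

lemma conjTranspose_propagator {X : Matrix ι ι ℂ} (hX : X.IsHermitian) (t : ℝ) :
    (propagator X t)ᴴ = NormedSpace.exp ((Complex.I * t) • X) := by
  rw [propagator, ← Matrix.exp_conjTranspose, conjTranspose_smul, hX.eq]
  simp [Complex.conj_I]

lemma isUnitary_propagator {X : Matrix ι ι ℂ} (hX : X.IsHermitian) (t : ℝ) :
    IsUnitary (propagator X t) := by
  rw [IsUnitary, conjTranspose_propagator hX, propagator, ← Matrix.exp_add_of_commute _ _
    (((Commute.refl X).smul_left _).smul_right _), ← add_smul]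
  simp

lemma propagator_mul_conjTranspose {X : Matrix ι ι ℂ} (hX : X.IsHermitian) (t : ℝ) :
    propagator X t * (propagator X t)ᴴ = 1 := by
  rw [conjTranspose_propagator hX, propagator, ← Matrix.exp_add_of_commute _ _
    (((Commute.refl X).smul_left _).smul_right _), ← add_smul]
  simp


lemma reachesIn_of_hasDerivAt {ρ0 : Matrix ι ι ℂ} {final : Matrix ι ι ℂ → Prop} {b τ : ℝ}
    (U G : ℝ → Matrix ι ι ℂ) (hGc : Continuous G) (hGh : ∀ t, (G t).IsHermitian)
    (hGb : ∀ t, ((G t * G t).trace).re ≤ b) (hU0 : U 0 = 1)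
    (hU : ∀ t, HasDerivAt U ((-Complex.I) • (G t * U t)) t)
    (hfin : final (U τ * ρ0 * (U τ)ᴴ)) : ReachesIn ρ0 final b τ := by
  refine ⟨G, fun t => U t * ρ0 * (U t)ᴴ, hGc.continuousOn, fun t _ => hGh t, fun t _ => hGb t,
    by simp [hU0], fun t _ => ?_, hfin⟩
  have h := (((hU t).mul_const ρ0).mul (hU t).star).hasDerivWithinAt (s := Set.Icc 0 τ)
  refine h.congr_deriv ?_
  simp only [Matrix.star_eq_conjTranspose, conjTranspose_smul, conjTranspose_mul, (hGh t).eq]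
  simp [mul_assoc, sub_eq_add_neg]

/-- `e^{-itX} e^{-itY}` is generated by the time-dependent Hamiltonian `e^{-itX} (X + Y) e^{itX}`,
whose bandwidth is constant. -/
lemma reachesIn_propagator_mul_propagator {ρ0 : Matrix ι ι ℂ} {final : Matrix ι ι ℂ → Prop}
    {τ : ℝ} {X Y : Matrix ι ι ℂ} (hX : X.IsHermitian) (hY : Y.IsHermitian)
    (hfin : final (propagator X τ * propagator Y τ * ρ0 * (propagator X τ * propagator Y τ)ᴴ)) :
    ReachesIn ρ0 final (((X + Y) * (X + Y)).trace.re) τ := by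
  have hunit : ∀ t, (propagator X t)ᴴ * propagator X t = 1 := isUnitary_propagator hX
  have hcancel : ∀ t Z, (propagator X t)ᴴ * (propagator X t * Z) = Z := fun t Z => by
    rw [← mul_assoc, hunit, one_mul]
  refine reachesIn_of_hasDerivAt (fun t => propagator X t * propagator Y t)
    (fun t => propagator X t * (X + Y) * (propagator X t)ᴴ) ?_ (fun t => ?_) (fun t => ?_)
    (by simp) (fun t => ?_) hfin
  · exact ((continuous_propagator X).mul continuous_const).mul
      (continuous_propagator X).matrix_conjTranspose
  · exact isHermitian_mul_mul_conjTranspose _ (hX.add hY)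
  · refine le_of_eq ?_
    simp only [mul_assoc, hcancel]
    rw [trace_mul_comm, ← mul_assoc, mul_assoc _ _ (propagator X t), hunit, mul_one]
  · refine ((hasDerivAt_propagator X t).mul (hasDerivAt_propagator Y t)).congr_deriv ?_
    have hXW : X * propagator X t = propagator X t * X :=
      (Commute.propagator_right (Commute.refl X) t).eq
    rw [mul_smul_comm, smul_mul_assoc, ← smul_add, hXW]
    simp only [mul_assoc, hcancel, mul_add, add_mul]

end Propagator

section Reachability

variable {ι : Type*} [Fintype ι] [DecidableEq ι]

lemma ReachesIn.mono_bound {ρ0 : Matrix ι ι ℂ} {final : Matrix ι ι ℂ → Prop} {b b' τ : ℝ}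
    (h : ReachesIn ρ0 final b τ) (hb : b ≤ b') : ReachesIn ρ0 final b' τ := by
  obtain ⟨H, ρ, hc, hh, hbd, h0, hd, hf⟩ := h
  exact ⟨H, ρ, hc, hh, fun t ht => (hbd t ht).trans hb, h0, hd, hf⟩

lemma ReachesIn.rescale {ρ0 : Matrix ι ι ℂ} {final : Matrix ι ι ℂ → Prop} {b τ c : ℝ}
    (h : ReachesIn ρ0 final b τ) (hc : 0 < c) : ReachesIn ρ0 final (c ^ 2 * b) (τ / c) := by
  obtain ⟨H, ρ, hcont, hherm, hbd, h0, hderiv, hfin⟩ := h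
  have hmaps : Set.MapsTo (fun s => c * s) (Set.Icc 0 (τ / c)) (Set.Icc 0 τ) := by
    rintro s ⟨hs0, hsτ⟩
    exact ⟨by positivity, by rwa [le_div_iff₀' hc] at hsτ⟩
  refine ⟨fun s => c • H (c * s), fun s => ρ (c * s), ?_, fun s hs => ?_, fun s hs => ?_,
    by simpa using h0, fun s hs => ?_, by simpa only [mul_div_cancel₀ τ hc.ne'] using hfin⟩
  · exact (hcont.comp (continuous_const_mul c).continuousOn hmaps).const_smul c
  · exact (hherm _ (hmaps hs)).smul (IsSelfAdjoint.all c)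
  · rw [smul_mul_smul_comm, trace_smul, Complex.smul_re, smul_eq_mul, ← sq]
    exact mul_le_mul_of_nonneg_left (hbd _ (hmaps hs)) (sq_nonneg c)
  · have hlin : HasDerivWithinAt (fun s => c * s) c (Set.Icc 0 (τ / c)) s := by
      simpa using ((hasDerivAt_id s).const_mul c).hasDerivWithinAt
    refine ((hderiv _ (hmaps hs)).scomp s hlin hmaps).congr_deriv ?_
    rw [smul_comm, smul_mul_assoc, mul_smul_comm, ← smul_sub]

end Reachability

section PassivizationTime

variable {ι : Type*} [Fintype ι] [DecidableEq ι] {A ρi : Matrix ι ι ℂ} {ω : ℝ}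

lemma tauPas_nonneg : 0 ≤ tauPas A ρi ω :=
  Real.sInf_nonneg fun _ hτ => hτ.1

lemma tauPas_le_of_reachesIn {τ : ℝ} (hτ : 0 ≤ τ) (h : ReachesIn ρi (IsPassive A ρi) (ω ^ 2) τ) :
    tauPas A ρi ω ≤ τ :=
  csInf_le ⟨0, fun _ hx => hx.1⟩ ⟨hτ, h⟩

lemma tauPas_lt_of_reachesIn {b τ : ℝ} (hω : 0 < ω) (hτ : 0 < τ) (hb : b < ω ^ 2)
    (h : ReachesIn ρi (IsPassive A ρi) b τ) : tauPas A ρi ω < τ := by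
  -- raising `b` to at least `ω² / 2` keeps the speed-up factor `ω / √b'` finite
  set b' := max b (ω ^ 2 / 2)
  have hb'0 : 0 < b' := lt_max_of_lt_right (by positivity)
  have hb'ω : b' < ω ^ 2 := max_lt hb (by linarith [sq_pos_of_pos hω])
  set c := ω / √b'
  have hc : 1 < c := (one_lt_div (Real.sqrt_pos.2 hb'0)).2 ((Real.sqrt_lt' hω).2 hb'ω)
  have hcb : c ^ 2 * b' = ω ^ 2 := by
    rw [div_pow, Real.sq_sqrt hb'0.le]
    field_simp
  have hfast := (h.mono_bound (le_max_left b (ω ^ 2 / 2))).rescale (zero_lt_one.trans hc)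
  rw [hcb] at hfast
  calc tauPas A ρi ω ≤ τ / c := tauPas_le_of_reachesIn (by positivity) hfast
    _ < τ := div_lt_self hτ hc

end PassivizationTime

section Passivity

variable {ι : Type*} [Fintype ι] [DecidableEq ι]

lemma IsPassive.conj_of_commute {A ρi ρ U : Matrix ι ι ℂ} (h : IsPassive A ρi ρ)
    (hU : IsUnitary U) (hAU : Commute A U) : IsPassive A ρi (U * ρ * Uᴴ) := fun V hV => by
  have hA : Uᴴ * (A * U) = A := by rw [hAU.eq, ← mul_assoc, hU, one_mul]
  rw [mul_assoc, mul_assoc, trace_mul_comm, mul_assoc, mul_assoc, hA]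
  exact h V hV

end Passivity

section Compression

variable {ι : Type*} [Fintype ι]

lemma trace_mul_self_re_pos {F : Matrix ι ι ℂ} (hF : F.IsHermitian) (hF0 : F ≠ 0) :
    0 < (F * F).trace.re := by
  have hpos : 0 < (Fᴴ * F).trace :=
    (posSemidef_conjTranspose_mul_self F).trace_nonneg.lt_of_ne
      (Ne.symm (mt trace_conjTranspose_mul_self_eq_zero_iff.1 hF0))
  rw [hF.eq] at hpos
  exact (Complex.pos_iff.1 hpos).1

lemma mul_eq_smul_of_fixedPoints {B P : Matrix ι ι ℂ} {c : ℂ} (hPP : P * P = P)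
    (hfix : ∀ v, P *ᵥ v = v ↔ B *ᵥ v = c • v) : B * P = c • P := by
  refine ext_iff_mulVec.2 fun v => ?_
  rw [← mulVec_mulVec, smul_mulVec]
  exact (hfix (P *ᵥ v)).1 (by rw [mulVec_mulVec, hPP])

lemma commute_compression_of_fixedPoints {B P : Matrix ι ι ℂ} {c : ℝ} (hB : B.IsHermitian)
    (hP : P.IsHermitian) (hPP : P * P = P) (hfix : ∀ v, P *ᵥ v = v ↔ B *ᵥ v = (c : ℂ) • v)
    (H : Matrix ι ι ℂ) : Commute B (P * H * P) := by
  have hBP := mul_eq_smul_of_fixedPoints hPP hfix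
  have hPB : P * B = (c : ℂ) • P := by
    simpa [hB.eq, hP.eq, Complex.conj_ofReal] using congrArg conjTranspose hBP
  change B * (P * H * P) = P * H * P * B
  rw [← mul_assoc, ← mul_assoc, hBP, mul_assoc (P * H) P B, hPB]
  simp only [smul_mul_assoc, mul_smul_comm]

lemma trace_mul_compression {P : Matrix ι ι ℂ} (hPP : P * P = P) (H : Matrix ι ι ℂ) :
    (H * (P * H * P)).trace = (P * H * P * (P * H * P)).trace := by
  rw [show P * H * P * (P * H * P) = P * (H * P * H * P) by simp only [mul_assoc, ← mul_assoc P P,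
    hPP], trace_mul_comm P]
  simp only [mul_assoc, hPP]

end Compression

section TimeOptimality

variable {ι : Type*} [Fintype ι] [DecidableEq ι]

lemma reachesIn_sub_of_commute_state {ρi H D : Matrix ι ι ℂ} {final : Matrix ι ι ℂ → Prop}
    {τ : ℝ} (hH : H.IsHermitian) (hD : D.IsHermitian) (hDρ : Commute D ρi)
    (hfin : final (propagator H τ * ρi * (propagator H τ)ᴴ)) :
    ReachesIn ρi final (((H - D) * (H - D)).trace.re) τ := by
  rw [sub_eq_add_neg]
  refine reachesIn_propagator_mul_propagator hH hD.neg ?_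
  have hfix : ∀ Z, propagator (-D) τ * (ρi * ((propagator (-D) τ)ᴴ * Z)) = ρi * Z := fun Z => by
    rw [← mul_assoc, ← (Commute.propagator_right hDρ.neg_left.symm τ).eq, mul_assoc,
      ← mul_assoc (propagator (-D) τ), propagator_mul_conjTranspose hD.neg, one_mul]
  simpa only [conjTranspose_mul, mul_assoc, hfix] using hfin

lemma reachesIn_sub_of_commute_observable {A ρi H D : Matrix ι ι ℂ} {τ : ℝ}
    (hH : H.IsHermitian) (hD : D.IsHermitian) (hDA : Commute D A)
    (hfin : IsPassive A ρi (propagator H τ * ρi * (propagator H τ)ᴴ)) :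
    ReachesIn ρi (IsPassive A ρi) (((H - D) * (H - D)).trace.re) τ := by
  rw [← neg_add_eq_sub]
  refine reachesIn_propagator_mul_propagator hD.neg hH ?_
  simpa only [conjTranspose_mul, mul_assoc] using hfin.conj_of_commute
    (isUnitary_propagator hD.neg τ) (Commute.propagator_right hDA.neg_left.symm τ)

theorem eq_zero_of_trace_mul_eq_of_commute {A ρi H D : Matrix ι ι ℂ} {ω : ℝ} (hω : 0 < ω)
    (hnp : ¬ IsPassive A ρi ρi) (hH : H.IsHermitian) (hband : ((H * H).trace).re = ω ^ 2)
    (hopt : IsPassive A ρi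
      (propagator H (tauPas A ρi ω) * ρi * (propagator H (tauPas A ρi ω))ᴴ))
    (hD : D.IsHermitian) (htr : (H * D).trace = (D * D).trace)
    (hcomm : Commute D ρi ∨ Commute D A) : D = 0 := by
  set τ := tauPas A ρi ω
  have hτ : 0 < τ := tauPas_nonneg.lt_of_ne fun (h0 : 0 = τ) => hnp (by
    rwa [← h0, propagator_zero, conjTranspose_one, one_mul, mul_one] at hopt)
  by_contra hD0
  have hreach : ReachesIn ρi (IsPassive A ρi) (((H - D) * (H - D)).trace.re) τ := by
    rcases hcomm with hDρ | hDA
    · exact reachesIn_sub_of_commute_state hH hD hDρ hopt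
    · exact reachesIn_sub_of_commute_observable hH hD hDA hopt
  have hbandwidth : ((H - D) * (H - D)).trace.re = ω ^ 2 - (D * D).trace.re := by
    rw [sub_mul, mul_sub, mul_sub, trace_sub, trace_sub, trace_sub, trace_mul_comm D H, htr,
      sub_self, sub_zero, Complex.sub_re, hband]
  have hδ := trace_mul_self_re_pos hD hD0
  exact lt_irrefl τ (tauPas_lt_of_reachesIn hω hτ (by linarith) hreach)

end TimeOptimality

open NormedSpace in
theorem time_optimal_hamiltonian_parallel_and_incompatible_general
    {n : ℕ} (A ρi : Matrix (Fin n) (Fin n) ℂ)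
    (hA : A.IsHermitian) (hρi : IsDensity ρi)
    (ω : ℝ) (hω : 0 < ω)
    (hnp : ¬ IsPassive A ρi ρi)
    (H : Matrix (Fin n) (Fin n) ℂ) (hH : H.IsHermitian)
    (hband : ((H * H).trace).re = ω^2)
    (hopt : IsPassive A ρi
      (NormedSpace.exp ((-(Complex.I) * ((tauPas A ρi ω : ℝ) : ℂ)) • H) * ρi *
        NormedSpace.exp ((Complex.I * ((tauPas A ρi ω : ℝ) : ℂ)) • H))) :
    (∀ c : ℝ, (∃ v, v ≠ 0 ∧ A.mulVec v = (c : ℂ) • v) →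
      ∀ P : Matrix (Fin n) (Fin n) ℂ, P.IsHermitian → P * P = P →
        (∀ v, P.mulVec v = v ↔ A.mulVec v = (c : ℂ) • v) → P * H * P = 0) ∧
    (∀ c : ℝ, (∃ v, v ≠ 0 ∧ ρi.mulVec v = (c : ℂ) • v) →
      ∀ P : Matrix (Fin n) (Fin n) ℂ, P.IsHermitian → P * P = P →
        (∀ v, P.mulVec v = v ↔ ρi.mulVec v = (c : ℂ) • v) → P * H * P = 0) := by
  rw [← conjTranspose_propagator hH] at hopt
  have hcompr : ∀ P : Matrix (Fin n) (Fin n) ℂ, P.IsHermitian → P * P = P →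
      (Commute (P * H * P) ρi ∨ Commute (P * H * P) A) → P * H * P = 0 :=
    fun P hP hPP hcomm => eq_zero_of_trace_mul_eq_of_commute hω hnp hH hband hopt
      (by simpa [hP.eq] using isHermitian_mul_mul_conjTranspose P hH)
      (trace_mul_compression hPP H) hcomm
  refine ⟨fun _ _ P hP hPP hfix => hcompr P hP hPP (Or.inr ?_),
    fun _ _ P hP hPP hfix => hcompr P hP hPP (Or.inl ?_)⟩
  · exact (commute_compression_of_fixedPoints hA hP hPP hfix H).symm
  · exact (commute_compression_of_fixedPoints hρi.1.isHermitian hP hPP hfix H).symm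

open NormedSpace in
/-- a time-independent time-optimal Hamiltonian is parallel transporting and
completely incompatible with `A`: compressing it by the orthogonal projection onto any
eigenspace of `A`, or of `ρi`, gives zero. -/
theorem time_optimal_hamiltonian_parallel_and_incompatible
    {n : ℕ} (hn : 1 ≤ n) (A ρi : Matrix (Fin n) (Fin n) ℂ)
    (hA : A.IsHermitian) (hρi : IsDensity ρi) (hcomm : A * ρi = ρi * A)
    (ω : ℝ) (hω : 0 < ω)
    (hnp : ¬ IsPassive A ρi ρi)
    (H : Matrix (Fin n) (Fin n) ℂ) (hH : H.IsHermitian)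
    (hband : ((H * H).trace).re = ω^2)
    (hopt : IsPassive A ρi
      (NormedSpace.exp ((-(Complex.I) * ((tauPas A ρi ω : ℝ) : ℂ)) • H) * ρi *
        NormedSpace.exp ((Complex.I * ((tauPas A ρi ω : ℝ) : ℂ)) • H))) :
    (∀ c : ℝ, (∃ v, v ≠ 0 ∧ A.mulVec v = (c : ℂ) • v) →
      ∀ P : Matrix (Fin n) (Fin n) ℂ, P.IsHermitian → P * P = P →
        (∀ v, P.mulVec v = v ↔ A.mulVec v = (c : ℂ) • v) → P * H * P = 0) ∧
    (∀ c : ℝ, (∃ v, v ≠ 0 ∧ ρi.mulVec v = (c : ℂ) • v) →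
      ∀ P : Matrix (Fin n) (Fin n) ℂ, P.IsHermitian → P * P = P →
        (∀ v, P.mulVec v = v ↔ ρi.mulVec v = (c : ℂ) • v) → P * H * P = 0) :=
  time_optimal_hamiltonian_parallel_and_incompatible_general A ρi hA hρi ω hω hnp H hH hband hopt

end QSLPaper
end
end

section
/- The duration of a complete discharge process is at least the passivization time: if τ ≥ 0, V : [0,τ] → {Hermitian n×n matrices} is continuous with tr(V(t)²) ≤ ω² for all t, and ρ : [0,τ] → M_n(ℂ) is differentiable with ρ(0) = ρ_i, ρ'(t) = -i[H + V(t), ρ(t)] for all t, and ρ(τ) passive, then τ ≥ τ_pas. -/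
open Matrix Kronecker
open scoped ComplexOrder

attribute [local instance] Matrix.frobeniusSeminormedAddCommGroup
  Matrix.frobeniusNormedAddCommGroup Matrix.frobeniusNormedSpace

noncomputable section

namespace QSLPaper

/-! In the interaction picture `σ(t) = e^{itH} ρ(t) e^{-itH}` the drift `H` disappears: `σ` obeys
the von Neumann equation driven by `e^{itH} V(t) e^{-itH}` alone, which has the same bandwidth as
`V(t)`. Since `e^{itH}` commutes with `H`, `σ(τ)` has the same energy as `ρ(τ)` and is therefore
passive too, so a discharge process of duration `τ` yields an admissible passivization protocol
of the same duration. -/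

attribute [local instance] Matrix.frobeniusNormedRing Matrix.frobeniusNormedAlgebra

section InteractionPicture

variable {ι : Type*} [Fintype ι] [DecidableEq ι]

theorem trace_mul_mul_star_of_mem_unitary {U : Matrix ι ι ℂ} (hU : U ∈ unitary (Matrix ι ι ℂ))
    (A : Matrix ι ι ℂ) : (U * A * star U).trace = A.trace := by
  rw [trace_mul_cycle, Unitary.star_mul_self_of_mem hU, one_mul]

theorem mul_mul_star_mul_mul_mul_star_of_mem_unitary {U : Matrix ι ι ℂ}
    (hU : U ∈ unitary (Matrix ι ι ℂ)) (A B : Matrix ι ι ℂ) :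
    U * A * star U * (U * B * star U) = U * (A * B) * star U := by
  calc U * A * star U * (U * B * star U) = U * A * (star U * U) * B * star U := by
        simp only [mul_assoc]
    _ = U * (A * B) * star U := by
        rw [Unitary.star_mul_self_of_mem hU]; simp only [mul_one, mul_assoc]

theorem IsPassive.unitary_conj {A ρi ρ U : Matrix ι ι ℂ} (h : IsPassive A ρi ρ)
    (hU : U ∈ unitary (Matrix ι ι ℂ)) (hAU : Commute A U) :
    IsPassive A ρi (U * ρ * star U) := by
  intro W hW
  have hA : star U * A * U = A := by
    rw [mul_assoc, hAU.eq, ← mul_assoc, Unitary.star_mul_self_of_mem hU, one_mul]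
  calc ((U * ρ * star U * A).trace).re = ((star U * A * U * ρ).trace).re := by
        rw [mul_assoc (U * ρ), trace_mul_comm]; simp only [mul_assoc]
    _ = ((ρ * A).trace).re := by rw [hA, trace_mul_comm]
    _ ≤ _ := h W hW

theorem hasDerivWithinAt_unitary_conj {H : Matrix ι ι ℂ} (hH : H.IsHermitian)
    {U V ρ : ℝ → Matrix ι ι ℂ} {s : Set ℝ} {t : ℝ} (hU : U t ∈ unitary (Matrix ι ι ℂ))
    (hU' : HasDerivWithinAt U (U t * (Complex.I • H)) s t)
    (hρ : HasDerivWithinAt ρ ((-Complex.I) • ((H + V t) * ρ t - ρ t * (H + V t))) s t) :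
    HasDerivWithinAt (fun t => U t * ρ t * star (U t))
      ((-Complex.I) • (U t * V t * star (U t) * (U t * ρ t * star (U t))
        - U t * ρ t * star (U t) * (U t * V t * star (U t)))) s t := by
  refine ((hU'.mul hρ).mul hU'.star).congr_deriv ?_
  rw [mul_mul_star_mul_mul_mul_star_of_mem_unitary hU,
    mul_mul_star_mul_mul_mul_star_of_mem_unitary hU, star_mul, star_smul,
    Complex.star_def, Complex.conj_I, show star H = H from hH.eq]
  simp only [Pi.mul_apply, smul_sub, mul_sub, sub_mul, mul_add, add_mul, smul_add, smul_mul_assoc,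
    mul_smul_comm, neg_smul, mul_assoc, mul_neg, neg_mul]
  abel

def interactionFrame (H : Matrix ι ι ℂ) (t : ℝ) : Matrix ι ι ℂ :=
  NormedSpace.exp (t • (Complex.I • H))

variable {H : Matrix ι ι ℂ}

theorem interactionFrame_zero : interactionFrame H 0 = 1 := by
  simp [interactionFrame]

theorem hasDerivAt_interactionFrame (t : ℝ) :
    HasDerivAt (interactionFrame H) (interactionFrame H t * (Complex.I • H)) t :=
  hasDerivAt_exp_smul_const _ t

theorem continuous_interactionFrame : Continuous (interactionFrame H) :=
  continuous_iff_continuousAt.2 fun t => (hasDerivAt_interactionFrame t).continuousAt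

theorem commute_interactionFrame (t : ℝ) : Commute H (interactionFrame H t) :=
  (((Commute.refl H).smul_right Complex.I).smul_right t).exp_right

theorem interactionFrame_mem_unitary (hH : H.IsHermitian) (t : ℝ) :
    interactionFrame H t ∈ unitary (Matrix ι ι ℂ) := by
  refine NormedSpace.exp_mem_unitary_of_mem_skewAdjoint ?_
  rw [skewAdjoint.mem_iff, star_smul, star_smul, star_trivial, Complex.star_def, Complex.conj_I,
    show star H = H from hH.eq, neg_smul, smul_neg]

theorem reachesIn_isPassive_of_drift (hH : H.IsHermitian) {ρi : Matrix ι ι ℂ} {b τ : ℝ}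
    {V ρ : ℝ → Matrix ι ι ℂ}
    (hVc : ContinuousOn V (Set.Icc 0 τ))
    (hVh : ∀ t ∈ Set.Icc (0:ℝ) τ, (V t).IsHermitian)
    (hVb : ∀ t ∈ Set.Icc (0:ℝ) τ, ((V t * V t).trace).re ≤ b)
    (hρ0 : ρ 0 = ρi)
    (hode : ∀ t ∈ Set.Icc (0:ℝ) τ,
      HasDerivWithinAt ρ ((-Complex.I) • ((H + V t) * ρ t - ρ t * (H + V t)))
        (Set.Icc 0 τ) t)
    (hfin : IsPassive H ρi (ρ τ)) :
    ReachesIn ρi (IsPassive H ρi) b τ := by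
  set U := interactionFrame H
  have hU := interactionFrame_mem_unitary hH
  refine ⟨fun t => U t * V t * star (U t), fun t => U t * ρ t * star (U t),
    (continuous_interactionFrame.continuousOn.mul hVc).mul
      continuous_interactionFrame.star.continuousOn,
    fun t ht => isHermitian_mul_mul_conjTranspose _ (hVh t ht), fun t ht => ?_, ?_,
    fun t ht => hasDerivWithinAt_unitary_conj hH (hU t)
      (hasDerivAt_interactionFrame t).hasDerivWithinAt (hode t ht),
    hfin.unitary_conj (hU τ) (commute_interactionFrame τ)⟩
  · rw [mul_mul_star_mul_mul_mul_star_of_mem_unitary (hU t),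
      trace_mul_mul_star_of_mem_unitary (hU t)]
    exact hVb t ht
  · simp only [U, interactionFrame_zero, star_one, one_mul, mul_one, hρ0]

end InteractionPicture

theorem discharge_duration_ge_tauPas_general
    {n : ℕ} (H ρi : Matrix (Fin n) (Fin n) ℂ)
    (hH : H.IsHermitian)
    (ω : ℝ)
    (τ : ℝ) (hτ : 0 ≤ τ)
    (V ρ : ℝ → Matrix (Fin n) (Fin n) ℂ)
    (hVc : ContinuousOn V (Set.Icc 0 τ))
    (hVh : ∀ t ∈ Set.Icc (0:ℝ) τ, (V t).IsHermitian)
    (hVb : ∀ t ∈ Set.Icc (0:ℝ) τ, ((V t * V t).trace).re ≤ ω^2)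
    (hρ0 : ρ 0 = ρi)
    (hode : ∀ t ∈ Set.Icc (0:ℝ) τ,
      HasDerivWithinAt ρ ((-Complex.I) • ((H + V t) * ρ t - ρ t * (H + V t)))
        (Set.Icc 0 τ) t)
    (hfin : IsPassive H ρi (ρ τ)) :
    τ ≥ tauPas H ρi ω :=
  csInf_le ⟨0, fun _ hτ' => hτ'.1⟩
    ⟨hτ, reachesIn_isPassive_of_drift hH hVc hVh hVb hρ0 hode hfin⟩

/-- the duration of a complete discharge process of a quantum battery with
internal Hamiltonian `H` is at least the passivization time. -/
theorem discharge_duration_ge_tauPas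
    {n : ℕ} (hn : 1 ≤ n) (H ρi : Matrix (Fin n) (Fin n) ℂ)
    (hH : H.IsHermitian) (hρi : IsDensity ρi) (hcomm : H * ρi = ρi * H)
    (ω : ℝ) (hω : 0 < ω)
    (τ : ℝ) (hτ : 0 ≤ τ)
    (V ρ : ℝ → Matrix (Fin n) (Fin n) ℂ)
    (hVc : ContinuousOn V (Set.Icc 0 τ))
    (hVh : ∀ t ∈ Set.Icc (0:ℝ) τ, (V t).IsHermitian)
    (hVb : ∀ t ∈ Set.Icc (0:ℝ) τ, ((V t * V t).trace).re ≤ ω^2)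
    (hρ0 : ρ 0 = ρi)
    (hode : ∀ t ∈ Set.Icc (0:ℝ) τ,
      HasDerivWithinAt ρ ((-Complex.I) • ((H + V t) * ρ t - ρ t * (H + V t)))
        (Set.Icc 0 τ) t)
    (hfin : IsPassive H ρi (ρ τ)) :
    τ ≥ tauPas H ρi ω :=
  discharge_duration_ge_tauPas_general H ρi hH ω τ hτ V ρ hVc hVh hVb hρ0 hode hfin

end QSLPaper
end
end
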